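/- Let G be an abelian group, φ : G → G a group endomorphism, and k a positive integer. If H is a φ^k-inert subgroup of G, then the subgroup H' := T_k(φ,H) is φ-inert (and in particular φ^k-inert). -/

import Mathlib

open Filter Topology ENNReal

variable {G : Type*}

/-- The `n`-th partial `φ`-trajectory of a subgroup `H`:
`T_n(φ,H) = H + φ(H) + ... + φ^{n-1}(H)`. -/
noncomputable def traj [AddCommGroup G] (φ : AddMonoid.End G) (H : AddSubgroup G) (n : ℕ) :
    AddSubgroup G :=
  ⨆ i ∈ Finset.range n, H.map (φ ^ i)

/-- `H` is `φ`-inert if `(H + φ(H))/H` is finite. -/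
def IsInert [AddCommGroup G] (φ : AddMonoid.End G) (H : AddSubgroup G) : Prop :=
  Finite (↥(H ⊔ H.map φ) ⧸ H.addSubgroupOf (H ⊔ H.map φ))

/-- The sequence `n ↦ log |T_n(φ,H)/H| / n`. -/
noncomputable def entFun [AddCommGroup G] (φ : AddMonoid.End G) (H : AddSubgroup G) (n : ℕ) : ℝ :=
  Real.log (Nat.card (↥(traj φ H n) ⧸ H.addSubgroupOf (traj φ H n))) / n

/-- The intrinsic entropy of `φ` with respect to `H`: the limit of `entFun φ H`. -/
noncomputable def entWrt [AddCommGroup G] (φ : AddMonoid.End G) (H : AddSubgroup G) : ℝ :=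
  limUnder atTop (entFun φ H)

/-- The intrinsic algebraic entropy of `φ`. -/
noncomputable def intrinsicEnt [AddCommGroup G] (φ : AddMonoid.End G) : ℝ≥0∞ :=
  ⨆ (H : AddSubgroup G) (_ : IsInert φ H), ENNReal.ofReal (entWrt φ H)

/-- The `φ`-trajectory of `H`: `T(φ,H) = ⋃_{n ≥ 1} T_n(φ,H)`. -/
noncomputable def trajAll [AddCommGroup G] (φ : AddMonoid.End G) (H : AddSubgroup G) :
    AddSubgroup G :=
  ⨆ n : ℕ, traj φ H (n + 1)

section AuxLemmas
variable [AddCommGroup G]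

private lemma quot_finite_sup (A B C : AddSubgroup G)
    (h : Finite (↥B ⧸ A.addSubgroupOf B)) :
    Finite (↥(B ⊔ C) ⧸ (A ⊔ C).addSubgroupOf (B ⊔ C)) := by
  have hcond : A.addSubgroupOf B ≤
      ((A ⊔ C).addSubgroupOf (B ⊔ C)).comap (AddSubgroup.inclusion (le_sup_left : B ≤ B ⊔ C)) := by
    intro x hx
    simp only [AddSubgroup.mem_comap, AddSubgroup.mem_addSubgroupOf] at hx ⊢
    exact AddSubgroup.mem_sup_left hx
  set f := QuotientAddGroup.map (A.addSubgroupOf B) ((A ⊔ C).addSubgroupOf (B ⊔ C))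
    (AddSubgroup.inclusion le_sup_left) hcond with hf
  refine Finite.of_surjective f ?_
  intro x
  obtain ⟨⟨g, hg⟩, rfl⟩ := QuotientAddGroup.mk_surjective x
  obtain ⟨b, hb, c, hc, rfl⟩ := AddSubgroup.mem_sup.mp hg
  refine ⟨QuotientAddGroup.mk ⟨b, hb⟩, ?_⟩
  rw [hf, QuotientAddGroup.map_mk]
  rw [QuotientAddGroup.eq]
  simp only [AddSubgroup.mem_addSubgroupOf]
  show -(b : G) + (b + c) ∈ A ⊔ C
  have : -(b : G) + (b + c) = c := by abel
  rw [this]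
  exact AddSubgroup.mem_sup_right hc

private lemma quot_finite_map (f : G →+ G) (A B : AddSubgroup G)
    (h : Finite (↥B ⧸ A.addSubgroupOf B)) :
    Finite (↥(B.map f) ⧸ (A.map f).addSubgroupOf (B.map f)) := by
  have hcond : A.addSubgroupOf B ≤
      ((A.map f).addSubgroupOf (B.map f)).comap (f.addSubgroupMap B) := by
    intro x hx
    simp only [AddSubgroup.mem_comap, AddSubgroup.mem_addSubgroupOf] at hx ⊢
    exact ⟨x, hx, rfl⟩
  set F := QuotientAddGroup.map (A.addSubgroupOf B) ((A.map f).addSubgroupOf (B.map f))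
    (f.addSubgroupMap B) hcond with hF
  refine Finite.of_surjective F ?_
  intro x
  obtain ⟨⟨y, hy⟩, rfl⟩ := QuotientAddGroup.mk_surjective x
  obtain ⟨b, hb, rfl⟩ := hy
  refine ⟨QuotientAddGroup.mk ⟨b, hb⟩, ?_⟩
  rw [hF, QuotientAddGroup.map_mk]
  rfl

private lemma quot_finite_iff (J K : AddSubgroup G) :
    Finite (↥K ⧸ J.addSubgroupOf K) ↔ J.relIndex K ≠ 0 := by
  rw [AddSubgroup.relIndex, AddSubgroup.index, Nat.card_ne_zero]
  exact ⟨fun h => ⟨inferInstance, h⟩, fun h => h.2⟩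

private lemma quot_finite_trans (A B C : AddSubgroup G) (hAB : A ≤ B) (hBC : B ≤ C)
    (h1 : Finite (↥B ⧸ A.addSubgroupOf B)) (h2 : Finite (↥C ⧸ B.addSubgroupOf C)) :
    Finite (↥C ⧸ A.addSubgroupOf C) := by
  rw [quot_finite_iff] at h1 h2 ⊢
  rw [← AddSubgroup.relIndex_mul_relIndex A B C hAB hBC]
  exact Nat.mul_ne_zero h1 h2

end AuxLemmas

section TrajLemmas
variable [AddCommGroup G] (φ : AddMonoid.End G) (H : AddSubgroup G)

private lemma traj_zero : traj φ H 0 = ⊥ := by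
  simp [traj]

private lemma traj_one : traj φ H 1 = H := by
  simp only [traj, Finset.range_one, Finset.mem_singleton, iSup_iSup_eq_left, pow_zero]
  ext x
  refine AddSubgroup.mem_map.trans ?_
  constructor
  · rintro ⟨y, hy, rfl⟩; exact hy
  · intro hx; exact ⟨x, hx, rfl⟩

private lemma traj_succ (n : ℕ) : traj φ H (n + 1) = traj φ H n ⊔ H.map (φ ^ n) := by
  simp only [traj, Finset.range_add_one]
  rw [Finset.iSup_insert, sup_comm]

private lemma traj_mono {n m : ℕ} (h : n ≤ m) : traj φ H n ≤ traj φ H m := by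
  refine biSup_mono ?_
  intro i hi
  exact Finset.mem_range.mpr (lt_of_lt_of_le (Finset.mem_range.mp hi) h)

private lemma map_le_traj {i n : ℕ} (h : i < n) : H.map (φ ^ i) ≤ traj φ H n :=
  le_iSup₂ (f := fun j (_ : j ∈ Finset.range n) => H.map (φ ^ j)) i (Finset.mem_range.mpr h)

private lemma traj_add (n m : ℕ) :
    traj φ H (n + m) = traj φ H n ⊔ (traj φ H m).map (φ ^ n) := by
  induction m with
  | zero =>
    simp [traj_zero]
    intro x hx
    obtain ⟨y, hy, rfl⟩ := hx
    subst_vars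
    convert (traj φ H n).zero_mem
    exact map_zero (φ ^ n)
  | succ m ih =>
    rw [← Nat.add_assoc, traj_succ, ih, traj_succ, AddSubgroup.map_sup (traj φ H m) (H.map (φ ^ m)) (φ ^ n), sup_assoc,
      AddSubgroup.map_map (K := H) (φ ^ n) (φ ^ m)]
    congr 2
    show AddSubgroup.map (φ ^ (n + m)) H = AddSubgroup.map ((φ ^ n) * (φ ^ m)) H
    rw [← pow_add]

end TrajLemmas

/-- If `H` is `φ^k`-inert for some `k ≥ 1`, then `H' = T_k(φ,H)` is `φ`-inert
(and in particular `φ^k`-inert). -/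
theorem traj_isInert_of_pow_isInert [AddCommGroup G] (φ : AddMonoid.End G)
    (k : ℕ) (hk : 0 < k) (H : AddSubgroup G) (hH : IsInert (φ ^ k) H) :
    IsInert φ (traj φ H k) ∧ IsInert (φ ^ k) (traj φ H k) := by
  have h0 : Finite (↥(H ⊔ H.map (φ ^ k)) ⧸ H.addSubgroupOf (H ⊔ H.map (φ ^ k))) := hH
  have key : ∀ m, m ≤ k →
      Finite (↥(traj φ H (k + m)) ⧸ (traj φ H k).addSubgroupOf (traj φ H (k + m))) := by
    intro m
    induction m with
    | zero =>
      intro _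
      rw [Nat.add_zero, AddSubgroup.addSubgroupOf_self]
      have : Subsingleton (↥(traj φ H k) ⧸ (⊤ : AddSubgroup ↥(traj φ H k))) :=
        QuotientAddGroup.subsingleton_quotient_top
      exact Finite.of_subsingleton
    | succ m ih =>
      intro hm1
      have hm : m < k := hm1
      have h1 := quot_finite_map (φ ^ m) H (H ⊔ H.map (φ ^ k)) h0
      rw [AddSubgroup.map_sup H (H.map (φ ^ k)) (φ ^ m), AddSubgroup.map_map (K := H) (φ ^ m) (φ ^ k)] at h1
      have hcomp : AddSubgroup.map (AddMonoidHom.comp (φ ^ m) (φ ^ k)) H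
          = AddSubgroup.map (φ ^ (k + m)) H := by
        show AddSubgroup.map ((φ ^ m) * (φ ^ k)) H = AddSubgroup.map (φ ^ (k + m)) H
        rw [← pow_add, Nat.add_comm]
      rw [hcomp] at h1
      have h2 := quot_finite_sup (H.map (φ ^ m)) (H.map (φ ^ m) ⊔ H.map (φ ^ (k + m)))
        (traj φ H (k + m)) h1
      have e1 : H.map (φ ^ m) ⊔ traj φ H (k + m) = traj φ H (k + m) :=
        sup_eq_right.mpr (map_le_traj φ H (lt_of_lt_of_le hm (Nat.le_add_right k m)))
      have e2 : (H.map (φ ^ m) ⊔ H.map (φ ^ (k + m))) ⊔ traj φ H (k + m)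
          = traj φ H (k + m + 1) := by
        rw [sup_right_comm, e1, ← traj_succ]
      rw [e2, e1] at h2
      exact quot_finite_trans (traj φ H k) (traj φ H (k + m)) (traj φ H (k + m + 1))
        (traj_mono φ H (Nat.le_add_right k m)) (traj_mono φ H (Nat.le_succ _))
        (ih (le_of_lt hm)) h2
  have hHle : H ≤ traj φ H k :=
    le_trans (le_of_eq (traj_one φ H).symm) (traj_mono φ H hk)
  constructor
  · have e0 : traj φ H (1 + k) = H ⊔ (traj φ H k).map φ := by
      rw [traj_add, traj_one, pow_one]
    have e : traj φ H k ⊔ (traj φ H k).map φ = traj φ H (k + 1) := by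
      apply le_antisymm
      · refine sup_le (traj_mono φ H (Nat.le_succ k)) ?_
        rw [Nat.add_comm, e0]
        exact le_sup_right
      · rw [Nat.add_comm, e0]
        exact sup_le (le_trans hHle le_sup_left) le_sup_right
    show Finite _
    rw [e]
    exact key 1 hk
  · have e : traj φ H k ⊔ (traj φ H k).map (φ ^ k) = traj φ H (k + k) :=
      (traj_add φ H k k).symm
    show Finite _
    rw [e]
    exact key k le_rfl
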